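/- A triangulation of a convex polygon π with n ≥ 4 vertices all of whose interior edges are incident to a single vertex (a comb) has eccentricity exactly n − 3 in the flip-graph of π. -/

import Mathlib

/-!
Combinatorial model of a convex polygon with `n` vertices, labeled by `Fin n`
in clockwise cyclic order.
-/

/-- `c` lies strictly inside the clockwise arc going from `a` to `b`. -/
def Between (n : ℕ) (a c b : Fin n) : Prop :=
  0 < (c - a).val ∧ (c - a).val < (b - a).val

/-- Two edges on the polygon cross: their endpoints strictly interleave
in the clockwise cyclic order. -/
def Cross (n : ℕ) (e f : Finset (Fin n)) : Prop :=
  ∃ a b c d : Fin n, e = {a, b} ∧ f = {c, d} ∧ Between n a c b ∧ Between n b d a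

/-- The vertex immediately following `i` clockwise. -/
def nextV (n : ℕ) (i : Fin n) : Fin n :=
  ⟨(i.val + 1) % n, Nat.mod_lt _ i.pos⟩

/-- Boundary edges of the polygon: the pairs of cyclically consecutive vertices. -/
def IsBoundary (n : ℕ) (e : Finset (Fin n)) : Prop :=
  ∃ i : Fin n, e = {i, nextV n i}

/-- `E` is a triangulation of the convex (sub)polygon on the vertex set `W`:
an inclusion-maximal set of pairwise non-crossing edges on `W`. -/
def IsTriangulationOn (n : ℕ) (W : Finset (Fin n)) (E : Finset (Finset (Fin n))) : Prop :=
  (∀ e ∈ E, e ⊆ W) ∧ (∀ e ∈ E, e.card = 2) ∧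
    (∀ e ∈ E, ∀ f ∈ E, ¬ Cross n e f) ∧
    (∀ e : Finset (Fin n), e ⊆ W → e.card = 2 → (∀ f ∈ E, ¬ Cross n e f) → e ∈ E)

/-- A triangulation of the convex polygon with `n` vertices. -/
structure Triangulation (n : ℕ) where
  edges : Finset (Finset (Fin n))
  isTri : IsTriangulationOn n Finset.univ edges

theorem Triangulation.edges_injective (n : ℕ) :
    Function.Injective (Triangulation.edges (n := n)) := by
  rintro ⟨e, he⟩ ⟨f, hf⟩ h
  dsimp at h
  subst h
  rfl

/-- The flip-graph of the polygon: two triangulations are adjacent exactly when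
they differ by a single edge. -/
def flipGraph (n : ℕ) : SimpleGraph (Triangulation n) where
  Adj T U := T ≠ U ∧ (T.edges \ U.edges).card = 1 ∧ (U.edges \ T.edges).card = 1
  symm := ⟨fun T U h => ⟨h.1.symm, h.2.2, h.2.1⟩⟩
  loopless := ⟨fun T h => h.1 rfl⟩

noncomputable instance (n : ℕ) : Fintype (Triangulation n) :=
  Fintype.ofInjective Triangulation.edges (Triangulation.edges_injective n)

open Classical in
/-- The number of interior edges of `T` incident to the vertex `v`. -/
noncomputable def interiorDeg (n : ℕ) (T : Triangulation n) (v : Fin n) : ℕ :=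
  (T.edges.filter fun e => v ∈ e ∧ ¬ IsBoundary n e).card

/-- `T` has an ear in `v`: no interior edge of `T` is incident to `v`. -/
def HasEar (n : ℕ) (T : Triangulation n) (v : Fin n) : Prop :=
  ∀ e ∈ T.edges, ¬ IsBoundary n e → v ∉ e

/-- The eccentricity of `T` in the flip-graph: the maximum of `d(T,U)` over all
triangulations `U`. -/
noncomputable def eccentricity (n : ℕ) (T : Triangulation n) : ℕ :=
  Finset.univ.sup fun U : Triangulation n => (flipGraph n).dist T U

/-- The monotone relabeling of the vertices of the polygon after the deletion of
the vertex `a`. -/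
def collapse (n : ℕ) (a v : Fin (n + 2)) : Fin (n + 1) :=
  ⟨if v.val < a.val then v.val else v.val - 1, by
    have := v.isLt; have := a.isLt; split <;> omega⟩

/-- The edge set of the triangulation `T∖a` obtained by deleting the vertex `a` from a
triangulation with edge set `E`: remove the boundary edge `{a, a+1}`, replace `a` by
`a+1` in every remaining edge, and relabel the remaining vertices monotonically. -/
def deleteEdges (n : ℕ) (a : Fin (n + 2)) (E : Finset (Finset (Fin (n + 2)))) :
    Finset (Finset (Fin (n + 1))) :=
  (E.erase {a, a + 1}).image fun e =>
    e.image fun v => collapse n a (if v = a then a + 1 else v)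

/-- `c` is an apex of a triangle of `X` on the boundary edge `{a,b}`. -/
def ApexOf (n : ℕ) (X : Triangulation n) (a b c : Fin n) : Prop :=
  c ≠ a ∧ c ≠ b ∧ ({a, c} : Finset (Fin n)) ∈ X.edges ∧ ({b, c} : Finset (Fin n)) ∈ X.edges

/-- The flip between the adjacent triangulations `X` and `Y` is incident to `{a,b}`:
it affects the triangle containing `{a,b}`. -/
def FlipIncident (n : ℕ) (X Y : Triangulation n) (a b : Fin n) : Prop :=
  ∃ c : Fin n, (ApexOf n X a b c ∧ ¬ ApexOf n Y a b c) ∨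
    (ApexOf n Y a b c ∧ ¬ ApexOf n X a b c)

open Classical in
/-- The number of flips incident to `{a,b}` along the walk `p` in the flip-graph. -/
noncomputable def flipsIncident {n : ℕ} {T U : Triangulation n}
    (p : (flipGraph n).Walk T U) (a b : Fin n) : ℕ :=
  (p.darts.filter fun d => decide (FlipIncident n d.toProd.1 d.toProd.2 a b)).length

open Classical in
/-- `a 0, …, a (k-1)` is a shelling of `T` at `v`: an ordering of the vertices not
joined to `v` by an edge of `T` such that, for every `i`, the edges of `T` incident
to none of `a i, …, a (k-1)` form a triangulation of a convex polygon. -/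
def IsShelling (n k : ℕ) (T : Triangulation n) (v : Fin n) (a : Fin k → Fin n) : Prop :=
  Function.Injective a ∧
    (∀ w : Fin n, (∃ i, a i = w) ↔ w ≠ v ∧ ({v, w} : Finset (Fin n)) ∉ T.edges) ∧
    ∀ i : Fin k,
      IsTriangulationOn n (Finset.univ.filter fun w => ∀ j, i ≤ j → w ≠ a j)
        (T.edges.filter fun e => ∀ j, i ≤ j → a j ∉ e)

/-- `a i` is incident to at least two interior edges of `U` whose other vertex is not
among `a i, …, a (k-1)`. -/
def GoodAt (n k : ℕ) (U : Triangulation n) (a : Fin k → Fin n) (i : Fin k) : Prop :=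
  ∃ e₁ e₂ : Finset (Fin n), e₁ ∈ U.edges ∧ e₂ ∈ U.edges ∧ e₁ ≠ e₂ ∧
    ¬ IsBoundary n e₁ ∧ ¬ IsBoundary n e₂ ∧ a i ∈ e₁ ∧ a i ∈ e₂ ∧
    (∀ w ∈ e₁, w ≠ a i → ∀ j, i ≤ j → w ≠ a j) ∧
    (∀ w ∈ e₂, w ≠ a i → ∀ j, i ≤ j → w ≠ a j)

/-- The set `Ω(T,v)`: triangulations `U` with an ear in `v` such that, for some
shelling `a` of `T` at `v`, every `a i` is incident to at least two interior edges of
`U` whose other vertex is not among `a i, …, a (k-1)`. -/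
def Omega (n k : ℕ) (T : Triangulation n) (v : Fin n) : Set (Triangulation n) :=
  {U | HasEar n U v ∧ ∃ a : Fin k → Fin n, IsShelling n k T v a ∧ ∀ i, GoodAt n k U a i}

/-- The set `Ω̃(T,a,b)`: triangulations `U` such that every interior edge shared by `T`
and `U` is incident to `a` or to `b`, and every vertex on the left of `(a,b)` is
incident to at least two interior edges of `U`. -/
def OmegaTilde (n : ℕ) (T : Triangulation n) (a b : Fin n) : Set (Triangulation n) :=
  {U | (∀ e ∈ T.edges, e ∈ U.edges → ¬ IsBoundary n e → a ∈ e ∨ b ∈ e) ∧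
    ∀ c : Fin n, Between n a c b → 2 ≤ interiorDeg n U c}

/-- `(a,b,c)` is a clockwise-oriented central triangle of `T`: the oriented edges
`(a,b)`, `(b,c)` and `(c,a)` have length at most `n/2` and `{a,b}`, `{b,c}`, `{a,c}`
are edges of `T`. -/
def CentralTriangle (n : ℕ) (T : Triangulation n) (a b c : Fin n) : Prop :=
  2 * (b - a).val ≤ n ∧ 2 * (c - b).val ≤ n ∧ 2 * (a - c).val ≤ n ∧
    ({a, b} : Finset (Fin n)) ∈ T.edges ∧ ({b, c} : Finset (Fin n)) ∈ T.edges ∧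
    ({a, c} : Finset (Fin n)) ∈ T.edges

/-!
A comb `T` at `v` contains every edge incident to `v`, so its interior edges are the `n - 3`
spokes `{v, u}`. If a triangulation `U` misses a spoke `{v, u}`, let `a` and `b` be the
neighbours of `v` in `U` closest to `u` on either side: then `{a, b}` is an edge of `U`, and
flipping it inside the quadrilateral `v a c b`, where `a c b` is the triangle of `U` beyond
`{a, b}`, creates a new spoke `{v, c}` without destroying any. Hence `U` is at most `n - 3`
flips away from `T`. Conversely, every flip changes a single edge, and the comb at the vertex
following `v` contains none of the spokes of `T`, so it is at distance at least `n - 3`.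

Vertices are located by their clockwise offsets `(x - v).val` from a base vertex `v`, which
turns crossing and adjacency into inequalities between natural numbers.
-/

theorem Finset.pair_eq_pair_iff {α : Type*} [DecidableEq α] {x y z w : α} :
    ({x, y} : Finset α) = {z, w} ↔ x = z ∧ y = w ∨ x = w ∧ y = z := by
  rw [← Finset.coe_inj, Finset.coe_pair, Finset.coe_pair, Set.pair_eq_pair_iff]

theorem Finset.exists_eq_pair_of_card_eq_two {α : Type*} [DecidableEq α] {s : Finset α} {a : α}
    (hs : s.card = 2) (ha : a ∈ s) : ∃ b, b ≠ a ∧ s = {a, b} := by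
  obtain ⟨x, y, hxy, rfl⟩ := Finset.card_eq_two.mp hs
  rcases Finset.mem_insert.mp ha with rfl | ha
  · exact ⟨y, hxy.symm, rfl⟩
  · rw [Finset.mem_singleton.mp ha]
    exact ⟨x, hxy, Finset.pair_comm x y⟩

theorem SimpleGraph.exists_walk_length_le_of_forall_exists_adj_lt {V : Type*}
    (G : SimpleGraph V) {t : V} (φ : V → ℕ) (hzero : ∀ u, φ u = 0 → u = t)
    (hstep : ∀ u, φ u ≠ 0 → ∃ u', G.Adj u u' ∧ φ u' < φ u) (u : V) :
    ∃ p : G.Walk t u, p.length ≤ φ u := by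
  induction hφ : φ u using Nat.strong_induction_on generalizing u with
  | _ k ih =>
    rcases eq_or_ne k 0 with rfl | hk
    · obtain rfl := hzero u hφ
      exact ⟨.nil, by simp⟩
    · obtain ⟨u', hadj, hlt⟩ := hstep u (hφ ▸ hk)
      obtain ⟨p, hp⟩ := ih (φ u') (hφ ▸ hlt) u' rfl
      exact ⟨p.concat hadj.symm, by rw [SimpleGraph.Walk.length_concat]; omega⟩

variable {n : ℕ}

namespace Triangulation

variable (U : Triangulation n)

theorem not_cross {e f : Finset (Fin n)} (he : e ∈ U.edges) (hf : f ∈ U.edges) :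
    ¬ Cross n e f :=
  U.isTri.2.2.1 e he f hf

theorem mem_edges_of_forall_not_cross {e : Finset (Fin n)} (he : e.card = 2)
    (h : ∀ f ∈ U.edges, ¬ Cross n e f) : e ∈ U.edges :=
  U.isTri.2.2.2 e (Finset.subset_univ e) he h

theorem eq_of_edges_subset {T : Triangulation n} (h : T.edges ⊆ U.edges) : T = U :=
  edges_injective n <| h.antisymm fun e he =>
    T.mem_edges_of_forall_not_cross (U.isTri.2.1 e he) fun _ hf => U.not_cross he (h hf)

def IsComb (T : Triangulation n) (v : Fin n) : Prop :=
  ∀ e ∈ T.edges, ¬ IsBoundary n e → v ∈ e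

end Triangulation

open Classical in
noncomputable def combEdges (n : ℕ) (w : Fin n) : Finset (Finset (Fin n)) :=
  Finset.univ.filter fun e => e.card = 2 ∧ (w ∈ e ∨ IsBoundary n e)

theorem mem_combEdges {w : Fin n} {e : Finset (Fin n)} :
    e ∈ combEdges n w ↔ e.card = 2 ∧ (w ∈ e ∨ IsBoundary n e) := by
  simp [combEdges]

open Classical in
/-- The `n - 3` interior edges of the comb at `v`. -/
noncomputable def spokes (v : Fin n) : Finset (Finset (Fin n)) :=
  (Finset.univ.filter fun u => 2 ≤ (u - v).val ∧ (u - v).val ≤ n - 2).image fun u => {v, u}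

theorem mem_spokes {v : Fin n} {e : Finset (Fin n)} :
    e ∈ spokes v ↔ ∃ u, 2 ≤ (u - v).val ∧ (u - v).val ≤ n - 2 ∧ e = {v, u} := by
  simp [spokes, and_assoc, eq_comm]

def Triangulation.replaceEdge (U : Triangulation n) (f e : Finset (Fin n)) :
    Finset (Finset (Fin n)) :=
  insert e (U.edges.erase f)

theorem flipGraph_adj_of_edges_eq_replaceEdge {U U' : Triangulation n} {e f : Finset (Fin n)}
    (hU' : U'.edges = U.replaceEdge f e) (he : e ∉ U.edges) (hf : f ∈ U.edges) :
    (flipGraph n).Adj U U' := by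
  have hef : e ≠ f := fun h => he (h ▸ hf)
  have hfU' : f ∉ U'.edges := by simp [hU', Triangulation.replaceEdge, hef.symm]
  refine ⟨fun h => hfU' (h ▸ hf), Finset.card_eq_one.mpr ⟨f, ?_⟩,
    Finset.card_eq_one.mpr ⟨e, ?_⟩⟩ <;>
  · ext x
    simp only [hU', Triangulation.replaceEdge, Finset.mem_sdiff, Finset.mem_insert,
      Finset.mem_erase, Finset.mem_singleton]
    grind

theorem card_sdiff_le_length {X Y : Triangulation n} (p : (flipGraph n).Walk X Y) :
    (X.edges \ Y.edges).card ≤ p.length := by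
  induction p with
  | nil => simp
  | @cons X Z Y h p ih =>
    calc (X.edges \ Y.edges).card
        ≤ (X.edges \ Z.edges ∪ Z.edges \ Y.edges).card :=
          Finset.card_le_card (sdiff_triangle _ _ _)
      _ ≤ (X.edges \ Z.edges).card + (Z.edges \ Y.edges).card := Finset.card_union_le _ _
      _ ≤ (SimpleGraph.Walk.cons h p).length := by rw [SimpleGraph.Walk.length_cons, h.2.1]; omega

theorem card_sdiff_le_dist {X Y : Triangulation n} (h : (flipGraph n).Reachable X Y) :
    (X.edges \ Y.edges).card ≤ (flipGraph n).dist X Y := by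
  obtain ⟨p, hp⟩ := h.exists_walk_length_eq_dist
  exact hp ▸ card_sdiff_le_length p

namespace Fin

theorem val_sub_eq_ite (x v : Fin n) :
    (x - v).val = if v ≤ x then x.val - v.val else n + x.val - v.val := by
  split_ifs with h
  · exact sub_val_of_le h
  · exact coe_sub_iff_lt.mpr (not_le.mp h)

variable [NeZero n]

@[simp]
theorem val_sub_self (v : Fin n) : (v - v).val = 0 := by
  rw [sub_self, val_zero]

theorem sub_val_injective (v : Fin n) : Function.Injective fun x : Fin n => (x - v).val :=
  fun _ _ h => sub_left_inj.mp (Fin.ext h)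

theorem exists_sub_val_eq (v : Fin n) {k : ℕ} (hk : k < n) : ∃ x : Fin n, (x - v).val = k :=
  ⟨v + ⟨k, hk⟩, by rw [add_sub_cancel_left]⟩

end Fin

variable [NeZero n]

theorem nextV_sub_val (v i : Fin n) :
    (nextV n i - v).val = if (i - v).val + 1 < n then (i - v).val + 1 else 0 := by
  have hnext : nextV n i = i + 1 := by
    ext
    simp only [nextV, Fin.val_add, Fin.val_one', Nat.add_mod_mod]
  have hval : (nextV n i - v).val = ((i - v).val + 1) % n := by
    rw [hnext, add_sub_right_comm, Fin.val_add, Fin.val_one', Nat.add_mod_mod]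
  have := (i - v).isLt
  split_ifs with h
  · rw [hval, Nat.mod_eq_of_lt h]
  · rw [hval, show (i - v).val + 1 = n by omega, Nat.mod_self]

theorem between_iff_sub_val (v x y z : Fin n) :
    Between n x y z ↔
      ((x - v).val < (y - v).val ∧ (y - v).val < (z - v).val) ∨
      ((z - v).val < (x - v).val ∧ (x - v).val < (y - v).val) ∨
      ((y - v).val < (z - v).val ∧ (z - v).val < (x - v).val) := by
  rw [Between, ← sub_sub_sub_cancel_right y x v, ← sub_sub_sub_cancel_right z x v,
    Fin.val_sub_eq_ite (y - v), Fin.val_sub_eq_ite (z - v)]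
  simp only [Fin.le_def]
  have := (x - v).isLt; have := (y - v).isLt; have := (z - v).isLt
  split_ifs <;> omega

theorem isBoundary_pair_iff (v : Fin n) {x y : Fin n} (hxy : (x - v).val < (y - v).val) :
    IsBoundary n {x, y} ↔
      (y - v).val = (x - v).val + 1 ∨ ((x - v).val = 0 ∧ (y - v).val = n - 1) := by
  have hx := (x - v).isLt; have hy := (y - v).isLt
  constructor
  · rintro ⟨i, hi⟩
    have hnext := nextV_sub_val v i
    rcases Finset.pair_eq_pair_iff.mp hi with ⟨rfl, rfl⟩ | ⟨rfl, rfl⟩ <;>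
      split_ifs at hnext <;> omega
  · rintro (h | ⟨hx0, hyn⟩)
    · have hy : y = nextV n x := Fin.sub_val_injective v (by
        simp only [nextV_sub_val]; split_ifs <;> omega)
      exact ⟨x, by rw [hy]⟩
    · have hx : x = nextV n y := Fin.sub_val_injective v (by
        simp only [nextV_sub_val]; split_ifs <;> omega)
      exact ⟨y, by rw [hx, Finset.pair_comm]⟩

theorem cross_pair_of_sub_val (v : Fin n) {s t x y : Fin n}
    (hsx : (s - v).val < (x - v).val) (hxt : (x - v).val < (t - v).val)
    (hy : (y - v).val < (s - v).val ∨ (t - v).val < (y - v).val) :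
    Cross n {s, t} {x, y} := by
  refine ⟨s, t, x, y, rfl, rfl, ?_, ?_⟩ <;> rw [between_iff_sub_val v] <;> omega

namespace Cross

variable {e f : Finset (Fin n)}

theorem exists_of_pair (v : Fin n) {s t : Fin n} (h : Cross n {s, t} f)
    (hst : (s - v).val < (t - v).val) :
    ∃ x y, f = {x, y} ∧ (s - v).val < (x - v).val ∧ (x - v).val < (t - v).val ∧
      ((y - v).val < (s - v).val ∨ (t - v).val < (y - v).val) := by
  obtain ⟨a, b, c, d, hab, rfl, h₁, h₂⟩ := h
  rw [between_iff_sub_val v] at h₁ h₂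
  rcases Finset.pair_eq_pair_iff.mp hab with ⟨rfl, rfl⟩ | ⟨rfl, rfl⟩
  · exact ⟨c, d, rfl, by omega⟩
  · exact ⟨d, c, Finset.pair_comm c d, by omega⟩

theorem exists_sub_val (h : Cross n e f) :
    ∃ a b c d, e = {a, b} ∧ f = {c, d} ∧ 0 < (c - a).val ∧ (c - a).val < (b - a).val ∧
      (b - a).val < (d - a).val := by
  obtain ⟨a, b, c, d, rfl, rfl, h₁, h₂⟩ := h
  rw [between_iff_sub_val a, Fin.val_sub_self] at h₂
  exact ⟨a, b, c, d, rfl, rfl, h₁.1, h₁.2, by omega⟩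

theorem symm (h : Cross n e f) : Cross n f e := by
  obtain ⟨a, b, c, d, rfl, rfl, h₁, h₂, h₃⟩ := h.exists_sub_val
  have := (d - a).isLt
  refine ⟨c, d, b, a, rfl, Finset.pair_comm a b, ?_, ?_⟩ <;>
    simp only [between_iff_sub_val a, Fin.val_sub_self] <;> omega

theorem disjoint (h : Cross n e f) : Disjoint e f := by
  obtain ⟨a, b, c, d, rfl, rfl, h₁, h₂, h₃⟩ := h.exists_sub_val
  have h₀ := Fin.val_sub_self a
  simp only [Finset.disjoint_insert_left, Finset.disjoint_singleton_left, Finset.mem_insert,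
    Finset.mem_singleton, not_or]
  refine ⟨⟨?_, ?_⟩, ?_, ?_⟩ <;> rintro rfl <;> omega

theorem not_isBoundary_left (h : Cross n e f) : ¬ IsBoundary n e := by
  obtain ⟨a, b, c, d, rfl, rfl, h₁, h₂, h₃⟩ := h.exists_sub_val
  have := (d - a).isLt
  rw [isBoundary_pair_iff a (by rw [Fin.val_sub_self]; omega), Fin.val_sub_self]
  omega

theorem not_isBoundary_right (h : Cross n e f) : ¬ IsBoundary n f := by
  obtain ⟨a, b, c, d, rfl, rfl, h₁, h₂, h₃⟩ := h.exists_sub_val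
  rw [isBoundary_pair_iff a (by omega)]
  omega

end Cross

theorem isTriangulationOn_combEdges (w : Fin n) :
    IsTriangulationOn n Finset.univ (combEdges n w) := by
  refine ⟨fun e _ => Finset.subset_univ e, fun e he => (mem_combEdges.mp he).1, ?_, ?_⟩
  · intro e he f hf hc
    rcases (mem_combEdges.mp he).2 with hwe | hbe
    · rcases (mem_combEdges.mp hf).2 with hwf | hbf
      · exact Finset.disjoint_left.mp hc.disjoint hwe hwf
      · exact hc.not_isBoundary_right hbf
    · exact hc.not_isBoundary_left hbe
  · rintro e - he hnc
    refine mem_combEdges.mpr ⟨he, or_iff_not_imp_left.mpr fun hwe => ?_⟩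
    obtain ⟨x, y, hxy, rfl⟩ := Finset.card_eq_two.mp he
    clear he
    wlog hlt : (x - w).val < (y - w).val generalizing x y
    · rw [Finset.pair_comm] at hnc hwe ⊢
      refine this y x hxy.symm hnc hwe (lt_of_le_of_ne (not_lt.mp hlt) fun h => ?_)
      exact hxy (Fin.sub_val_injective w h.symm)
    have hx : 0 < (x - w).val := Nat.pos_of_ne_zero fun h =>
      hwe (by rw [Fin.sub_val_injective w (h.trans (Fin.val_sub_self w).symm)]; simp)
    by_contra hb
    rw [isBoundary_pair_iff w hlt] at hb
    obtain ⟨z, hz⟩ := Fin.exists_sub_val_eq w (show (x - w).val + 1 < n by omega)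
    refine hnc {w, z} (mem_combEdges.mpr ⟨Finset.card_pair ?_, Or.inl (by simp)⟩) ?_
    · rintro rfl; simp at hz
    · rw [Finset.pair_comm w z]
      exact cross_pair_of_sub_val w (by omega) (by omega) (Or.inl (by rw [Fin.val_sub_self]; omega))

noncomputable def comb (w : Fin n) : Triangulation n :=
  ⟨combEdges n w, isTriangulationOn_combEdges w⟩

theorem card_spokes (v : Fin n) : (spokes v).card = n - 3 := by
  classical
  rw [spokes, Finset.card_image_of_injOn]
  · rw [Finset.card_nbij (fun u => (u - v).val) (t := Finset.Icc 2 (n - 2)), Nat.card_Icc]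
    · omega
    · intro u hu; simpa using hu
    · exact (Fin.sub_val_injective v).injOn
    · intro k hk
      simp only [Finset.coe_Icc, Set.mem_Icc] at hk
      obtain ⟨u, hu⟩ := Fin.exists_sub_val_eq v (show k < n by omega)
      exact ⟨u, by simp [hu, hk], hu⟩
  · intro u hu u' hu' h
    rcases Finset.pair_eq_pair_iff.mp h with ⟨-, h⟩ | ⟨rfl, -⟩
    · exact h
    · simp at hu'

namespace Triangulation

variable (U : Triangulation n) (v : Fin n)

theorem mem_edges_of_isBoundary {e : Finset (Fin n)} (hb : IsBoundary n e) (he : e.card = 2) :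
    e ∈ U.edges :=
  U.mem_edges_of_forall_not_cross he fun _ _ hc => hc.not_isBoundary_left hb

theorem exists_neighbors_around {u : Fin n} (hu : ({v, u} : Finset (Fin n)) ∉ U.edges)
    (hu₁ : 1 < (u - v).val) (hu₂ : (u - v).val < n - 1) :
    ∃ a b : Fin n,
      ({v, a} : Finset (Fin n)) ∈ U.edges ∧ ({v, b} : Finset (Fin n)) ∈ U.edges ∧
      0 < (a - v).val ∧ (a - v).val + 1 < (b - v).val ∧
      ∀ z, ({v, z} : Finset (Fin n)) ∈ U.edges →
        ¬ ((a - v).val < (z - v).val ∧ (z - v).val < (b - v).val) := by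
  classical
  have hv := Fin.val_sub_self v
  obtain ⟨z₁, hz₁⟩ := Fin.exists_sub_val_eq v (show 1 < n by omega)
  obtain ⟨z₂, hz₂⟩ := Fin.exists_sub_val_eq v (show n - 1 < n by omega)
  have hz₁U : ({v, z₁} : Finset (Fin n)) ∈ U.edges :=
    U.mem_edges_of_isBoundary ((isBoundary_pair_iff v (by omega)).mpr (by omega))
      (Finset.card_pair (by rintro rfl; omega))
  have hz₂U : ({v, z₂} : Finset (Fin n)) ∈ U.edges :=
    U.mem_edges_of_isBoundary ((isBoundary_pair_iff v (by omega)).mpr (by omega))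
      (Finset.card_pair (by rintro rfl; omega))
  obtain ⟨a, ha, ha_max⟩ := Finset.exists_max_image
    (Finset.univ.filter fun z => ({v, z} : Finset (Fin n)) ∈ U.edges ∧
      0 < (z - v).val ∧ (z - v).val < (u - v).val)
    (fun z => (z - v).val)
    ⟨z₁, Finset.mem_filter.mpr ⟨Finset.mem_univ _, hz₁U, by omega, by omega⟩⟩
  obtain ⟨b, hb, hb_min⟩ := Finset.exists_min_image
    (Finset.univ.filter fun z => ({v, z} : Finset (Fin n)) ∈ U.edges ∧
      (u - v).val < (z - v).val)
    (fun z => (z - v).val)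
    ⟨z₂, Finset.mem_filter.mpr ⟨Finset.mem_univ _, hz₂U, by omega⟩⟩
  simp only [Finset.mem_filter, Finset.mem_univ, true_and] at ha hb ha_max hb_min
  refine ⟨a, b, ha.1, hb.1, ha.2.1, by omega, fun z hz ⟨hza, hzb⟩ => ?_⟩
  rcases lt_trichotomy (z - v).val (u - v).val with h | h | h
  · exact absurd (ha_max z ⟨hz, by omega, h⟩) (by omega)
  · exact hu (Fin.sub_val_injective v h ▸ hz)
  · exact absurd (hb_min z ⟨hz, h⟩) (by omega)

theorem pair_mem_edges_of_no_neighbor_between {a b : Fin n}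
    (ha : ({v, a} : Finset (Fin n)) ∈ U.edges) (hb : ({v, b} : Finset (Fin n)) ∈ U.edges)
    (ha₀ : 0 < (a - v).val) (hab : (a - v).val < (b - v).val)
    (hgap : ∀ z, ({v, z} : Finset (Fin n)) ∈ U.edges →
      ¬ ((a - v).val < (z - v).val ∧ (z - v).val < (b - v).val)) :
    ({a, b} : Finset (Fin n)) ∈ U.edges := by
  have hv := Fin.val_sub_self v
  refine U.mem_edges_of_forall_not_cross (Finset.card_pair (by rintro rfl; omega)) fun f hf hc => ?_
  obtain ⟨z, w, rfl, hz₁, hz₂, hw⟩ := hc.exists_of_pair v hab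
  rcases Nat.eq_zero_or_pos (w - v).val with hw₀ | hw₀
  · obtain rfl : w = v := Fin.sub_val_injective v (hw₀.trans hv.symm)
    exact hgap z (by rwa [Finset.pair_comm]) ⟨hz₁, hz₂⟩
  · rcases hw with hw | hw
    · exact U.not_cross ha (by rwa [Finset.pair_comm])
        (cross_pair_of_sub_val v (by omega) hw (Or.inr hz₁))
    · exact U.not_cross hb hf (cross_pair_of_sub_val v (by omega) hz₂ (Or.inr hw))

theorem exists_apex {a b : Fin n} (hab : ({a, b} : Finset (Fin n)) ∈ U.edges)
    (h : (a - v).val + 1 < (b - v).val) :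
    ∃ c, (a - v).val < (c - v).val ∧ (c - v).val < (b - v).val ∧
      ({a, c} : Finset (Fin n)) ∈ U.edges ∧ ({b, c} : Finset (Fin n)) ∈ U.edges := by
  classical
  have hbn := (b - v).isLt
  obtain ⟨z, hz⟩ := Fin.exists_sub_val_eq v (show (a - v).val + 1 < n by omega)
  have hazU : ({a, z} : Finset (Fin n)) ∈ U.edges :=
    U.mem_edges_of_isBoundary ((isBoundary_pair_iff v (by omega)).mpr (Or.inl hz))
      (Finset.card_pair (by rintro rfl; omega))
  -- choosing the neighbour of `a` farthest from `a` makes `{b, c}` an edge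
  obtain ⟨c, hc, hc_max⟩ := Finset.exists_max_image
    (Finset.univ.filter fun z => ({a, z} : Finset (Fin n)) ∈ U.edges ∧
      (a - v).val < (z - v).val ∧ (z - v).val < (b - v).val)
    (fun z => (z - v).val)
    ⟨z, Finset.mem_filter.mpr ⟨Finset.mem_univ _, hazU, by omega, by omega⟩⟩
  simp only [Finset.mem_filter, Finset.mem_univ, true_and] at hc hc_max
  obtain ⟨hac, hac', hcb⟩ := hc
  refine ⟨c, hac', hcb, hac,
    U.mem_edges_of_forall_not_cross (Finset.card_pair (by rintro rfl; omega)) fun f hf hx => ?_⟩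
  rw [Finset.pair_comm] at hx
  obtain ⟨w, z, rfl, hw₁, hw₂, hz⟩ := hx.exists_of_pair v hcb
  rcases lt_trichotomy (z - v).val (a - v).val with hza | hza | hza
  · exact U.not_cross hab hf (cross_pair_of_sub_val v (by omega) hw₂ (Or.inl hza))
  · obtain rfl := Fin.sub_val_injective v hza
    exact absurd (hc_max w ⟨by rwa [Finset.pair_comm], by omega, hw₂⟩) (by omega)
  · rcases hz with hz | hz
    · exact U.not_cross hac (by rwa [Finset.pair_comm])
        (cross_pair_of_sub_val v hza hz (Or.inr hw₁))
    · exact U.not_cross hab hf (cross_pair_of_sub_val v (by omega) hw₂ (Or.inr hz))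

section Quadrilateral

/- Here `v, a, c, b` are the corners, in clockwise order, of a quadrilateral of `U` with
diagonal `{a, b}`; flipping that diagonal replaces it by `{v, c}`. -/

variable {a b c : Fin n}

theorem cross_diagonals (ha₀ : 0 < (a - v).val) (hac : (a - v).val < (c - v).val)
    (hcb : (c - v).val < (b - v).val) : Cross n {a, b} {v, c} := by
  rw [Finset.pair_comm v c]
  exact cross_pair_of_sub_val v hac hcb (Or.inl (by rw [Fin.val_sub_self]; exact ha₀))

theorem not_cross_of_quadrilateral (hva : ({v, a} : Finset (Fin n)) ∈ U.edges)
    (hvb : ({v, b} : Finset (Fin n)) ∈ U.edges) (hac : ({a, c} : Finset (Fin n)) ∈ U.edges)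
    (hbc : ({b, c} : Finset (Fin n)) ∈ U.edges) (ha₀ : 0 < (a - v).val)
    (hac' : (a - v).val < (c - v).val) (hcb : (c - v).val < (b - v).val) :
    ∀ f ∈ U.edges, f ≠ {a, b} → ¬ Cross n {v, c} f := by
  intro f hf hfab hx
  have hv := Fin.val_sub_self v
  obtain ⟨z, w, rfl, hz₁, hz₂, hw⟩ := hx.exists_of_pair v (by omega)
  replace hw : (c - v).val < (w - v).val := by omega
  rcases lt_trichotomy (z - v).val (a - v).val with hza | hza | hza
  · exact U.not_cross hva hf (cross_pair_of_sub_val v (by omega) hza (Or.inr (by omega)))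
  · obtain rfl := Fin.sub_val_injective v hza
    rcases lt_trichotomy (w - v).val (b - v).val with hwb | hwb | hwb
    · refine U.not_cross hbc hf ?_
      rw [Finset.pair_comm b c, Finset.pair_comm z w]
      exact cross_pair_of_sub_val v hw hwb (Or.inl hac')
    · exact hfab (by rw [Fin.sub_val_injective v hwb])
    · exact U.not_cross hvb hf (cross_pair_of_sub_val v (by omega) (by omega) (Or.inr hwb))
  · exact U.not_cross hac hf (cross_pair_of_sub_val v hza hz₂ (Or.inr hw))

theorem mem_replaceEdge_of_forall_not_cross (hva : ({v, a} : Finset (Fin n)) ∈ U.edges)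
    (hvb : ({v, b} : Finset (Fin n)) ∈ U.edges) (hac : ({a, c} : Finset (Fin n)) ∈ U.edges)
    (hbc : ({b, c} : Finset (Fin n)) ∈ U.edges) (ha₀ : 0 < (a - v).val)
    (hac' : (a - v).val < (c - v).val) (hcb : (c - v).val < (b - v).val)
    {e : Finset (Fin n)} (he : e.card = 2)
    (hnc : ∀ f ∈ U.replaceEdge {a, b} {v, c}, ¬ Cross n e f) :
    e ∈ U.replaceEdge {a, b} {v, c} := by
  have hv := Fin.val_sub_self v
  have hvc : {v, c} ∈ U.replaceEdge {a, b} {v, c} := Finset.mem_insert_self _ _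
  have hmem : ∀ f ∈ U.edges, f ≠ {a, b} → f ∈ U.replaceEdge {a, b} {v, c} :=
    fun f hf hne => Finset.mem_insert_of_mem (Finset.mem_erase.mpr ⟨hne, hf⟩)
  have hc : c ∉ ({a, b} : Finset (Fin n)) := by
    simp only [Finset.mem_insert, Finset.mem_singleton]; rintro (rfl | rfl) <;> omega
  have hv' : v ∉ ({a, b} : Finset (Fin n)) := by
    simp only [Finset.mem_insert, Finset.mem_singleton]; rintro (rfl | rfl) <;> omega
  by_cases hx : Cross n e {a, b}
  · obtain ⟨z, w, rfl, hz₁, hz₂, hw⟩ := hx.symm.exists_of_pair v (by omega)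
    rcases lt_trichotomy (z - v).val (c - v).val with hzc | hzc | hzc
    · refine absurd ?_ (hnc _ (hmem _ hac fun h => hc (h ▸ by simp)))
      exact (cross_pair_of_sub_val v hz₁ hzc (by omega)).symm
    · obtain rfl : z = c := Fin.sub_val_injective v hzc
      rcases Nat.eq_zero_or_pos (w - v).val with hw₀ | hw₀
      · rw [Fin.sub_val_injective v (hw₀.trans hv.symm), Finset.pair_comm _ v]
        exact hvc
      rcases hw with hw | hw
      · refine absurd ?_ (hnc _ (hmem _ hva fun h => hv' (h ▸ by simp)))
        rw [Finset.pair_comm z w]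
        exact (cross_pair_of_sub_val v (by omega) hw (Or.inr hac')).symm
      · refine absurd ?_ (hnc _ (hmem _ hvb fun h => hv' (h ▸ by simp)))
        exact (cross_pair_of_sub_val v (by omega) hcb (Or.inr hw)).symm
    · refine absurd ?_ (hnc _ (hmem _ hbc fun h => hc (h ▸ by simp)))
      rw [Finset.pair_comm b c]
      exact (cross_pair_of_sub_val v hzc hz₂ (by omega)).symm
  · refine hmem e (U.mem_edges_of_forall_not_cross he fun f hf => ?_) ?_
    · by_cases hfab : f = {a, b}
      · exact hfab ▸ hx
      · exact hnc f (hmem f hf hfab)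
    · rintro rfl
      exact hnc _ hvc (cross_diagonals v ha₀ hac' hcb)

theorem exists_adj_replaceEdge (hva : ({v, a} : Finset (Fin n)) ∈ U.edges)
    (hvb : ({v, b} : Finset (Fin n)) ∈ U.edges) (hac : ({a, c} : Finset (Fin n)) ∈ U.edges)
    (hbc : ({b, c} : Finset (Fin n)) ∈ U.edges) (hab : ({a, b} : Finset (Fin n)) ∈ U.edges)
    (ha₀ : 0 < (a - v).val) (hac' : (a - v).val < (c - v).val)
    (hcb : (c - v).val < (b - v).val) :
    ∃ U' : Triangulation n, (flipGraph n).Adj U U' ∧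
      U'.edges = U.replaceEdge {a, b} {v, c} := by
  have hv := Fin.val_sub_self v
  have hnc := U.not_cross_of_quadrilateral v hva hvb hac hbc ha₀ hac' hcb
  have hvc : ({v, c} : Finset (Fin n)) ∉ U.edges :=
    fun h => U.not_cross hab h (cross_diagonals v ha₀ hac' hcb)
  refine ⟨⟨U.replaceEdge {a, b} {v, c}, fun e _ => Finset.subset_univ e, ?_, ?_,
    fun e _ he => U.mem_replaceEdge_of_forall_not_cross v hva hvb hac hbc ha₀ hac' hcb he⟩,
    flipGraph_adj_of_edges_eq_replaceEdge rfl hvc hab, rfl⟩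
  · intro e he
    rcases Finset.mem_insert.mp he with rfl | he
    · exact Finset.card_pair (by rintro rfl; omega)
    · exact U.isTri.2.1 e (Finset.mem_of_mem_erase he)
  · intro e he f hf
    rcases Finset.mem_insert.mp he with rfl | he <;> rcases Finset.mem_insert.mp hf with rfl | hf
    · exact fun h => Finset.disjoint_left.mp h.disjoint (Finset.mem_insert_self v {c})
        (Finset.mem_insert_self v {c})
    · exact hnc f (Finset.mem_of_mem_erase hf) (Finset.ne_of_mem_erase hf)
    · exact fun h => hnc e (Finset.mem_of_mem_erase he) (Finset.ne_of_mem_erase he) h.symm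
    · exact U.not_cross (Finset.mem_of_mem_erase he) (Finset.mem_of_mem_erase hf)

end Quadrilateral

end Triangulation

namespace Triangulation.IsComb

variable {T : Triangulation n} {v : Fin n}

theorem mem_edges (hT : T.IsComb v) {e : Finset (Fin n)} (hv : v ∈ e) (he : e.card = 2) :
    e ∈ T.edges :=
  T.mem_edges_of_forall_not_cross he fun f hf hc => by
    by_cases hb : IsBoundary n f
    · exact hc.not_isBoundary_right hb
    · exact Finset.disjoint_left.mp hc.disjoint hv (hT f hf hb)

theorem sdiff_subset_spokes (hT : T.IsComb v) (U : Triangulation n) :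
    T.edges \ U.edges ⊆ spokes v := by
  intro e he
  obtain ⟨heT, heU⟩ := Finset.mem_sdiff.mp he
  have hcard := T.isTri.2.1 e heT
  have hb : ¬ IsBoundary n e := fun hb => heU (U.mem_edges_of_isBoundary hb hcard)
  obtain ⟨u, huv, rfl⟩ := Finset.exists_eq_pair_of_card_eq_two hcard (hT e heT hb)
  have hv := Fin.val_sub_self v
  have hu : 0 < (u - v).val := Nat.pos_of_ne_zero fun h =>
    huv (Fin.sub_val_injective v (h.trans hv.symm))
  rw [isBoundary_pair_iff v (by omega)] at hb
  exact mem_spokes.mpr ⟨u, by omega, by omega, rfl⟩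

theorem spokes_subset_sdiff_comb (hT : T.IsComb v) {w : Fin n} (hw : (w - v).val = 1) :
    spokes v ⊆ T.edges \ (comb w).edges := by
  intro e he
  obtain ⟨u, hu₁, hu₂, rfl⟩ := mem_spokes.mp he
  have hv := Fin.val_sub_self v
  refine Finset.mem_sdiff.mpr ⟨hT.mem_edges (by simp) (Finset.card_pair (by rintro rfl; omega)),
    fun hwe => ?_⟩
  rcases (mem_combEdges.mp hwe).2 with hw' | hb
  · simp only [Finset.mem_insert, Finset.mem_singleton] at hw'
    rcases hw' with rfl | rfl <;> omega
  · rw [isBoundary_pair_iff v (by omega)] at hb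
    omega

theorem exists_adj_card_sdiff_lt (hT : T.IsComb v) (U : Triangulation n)
    (hU : (T.edges \ U.edges).card ≠ 0) :
    ∃ U', (flipGraph n).Adj U U' ∧ (T.edges \ U'.edges).card < (T.edges \ U.edges).card := by
  obtain ⟨e, he⟩ := Finset.card_pos.mp (Nat.pos_of_ne_zero hU)
  obtain ⟨u, hu₁, hu₂, rfl⟩ := mem_spokes.mp (hT.sdiff_subset_spokes U he)
  have hv := Fin.val_sub_self v
  obtain ⟨a, b, hva, hvb, ha₀, hab', hgap⟩ :=
    U.exists_neighbors_around v (Finset.mem_sdiff.mp he).2 (by omega) (by omega)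
  have hab := U.pair_mem_edges_of_no_neighbor_between v hva hvb ha₀ (by omega) hgap
  obtain ⟨c, hac', hcb, hac, hbc⟩ := U.exists_apex v hab hab'
  obtain ⟨U', hUU', hU'⟩ := U.exists_adj_replaceEdge v hva hvb hac hbc hab ha₀ hac' hcb
  have hcross := cross_diagonals v ha₀ hac' hcb
  have hvcT : ({v, c} : Finset (Fin n)) ∈ T.edges :=
    hT.mem_edges (by simp) (Finset.card_pair (by rintro rfl; omega))
  have hvcU' : ({v, c} : Finset (Fin n)) ∈ U'.edges := hU' ▸ Finset.mem_insert_self _ _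
  refine ⟨U', hUU', Finset.card_lt_card ⟨fun x hx => ?_, fun h => ?_⟩⟩
  · obtain ⟨hxT, hxU'⟩ := Finset.mem_sdiff.mp hx
    refine Finset.mem_sdiff.mpr ⟨hxT, fun hxU => hxU' ?_⟩
    rw [hU']
    refine Finset.mem_insert_of_mem (Finset.mem_erase.mpr ⟨?_, hxU⟩)
    rintro rfl
    exact T.not_cross hxT hvcT hcross
  · have hvc : ({v, c} : Finset (Fin n)) ∈ T.edges \ U.edges :=
      Finset.mem_sdiff.mpr ⟨hvcT, fun hvcU => U.not_cross hab hvcU hcross⟩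
    exact (Finset.mem_sdiff.mp (h hvc)).2 hvcU'

theorem exists_walk (hT : T.IsComb v) (U : Triangulation n) :
    ∃ p : (flipGraph n).Walk T U, p.length ≤ (T.edges \ U.edges).card :=
  (flipGraph n).exists_walk_length_le_of_forall_exists_adj_lt (fun U => (T.edges \ U.edges).card)
    (fun U hU => (U.eq_of_edges_subset (Finset.sdiff_eq_empty_iff_subset.mp
      (Finset.card_eq_zero.mp hU))).symm)
    hT.exists_adj_card_sdiff_lt U

end Triangulation.IsComb

/-- A comb, that is a triangulation all of whose interior edges are
incident to a single vertex, has eccentricity exactly `n - 3` in the flip-graph. -/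
theorem stmt9 (n : ℕ) (hn : 4 ≤ n) (T : Triangulation n) (v : Fin n)
    (hcomb : ∀ e ∈ T.edges, ¬ IsBoundary n e → v ∈ e) :
    eccentricity n T = n - 3 := by
  have : NeZero n := ⟨by omega⟩
  have hT : T.IsComb v := hcomb
  refine le_antisymm (Finset.sup_le fun U _ => ?_) ?_
  · obtain ⟨p, hp⟩ := hT.exists_walk U
    calc (flipGraph n).dist T U ≤ p.length := SimpleGraph.dist_le p
      _ ≤ (T.edges \ U.edges).card := hp
      _ ≤ (spokes v).card := Finset.card_le_card (hT.sdiff_subset_spokes U)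
      _ = n - 3 := card_spokes v
  · obtain ⟨w, hw⟩ := Fin.exists_sub_val_eq v (show 1 < n by omega)
    obtain ⟨p, -⟩ := hT.exists_walk (comb w)
    calc n - 3 = (spokes v).card := (card_spokes v).symm
      _ ≤ (T.edges \ (comb w).edges).card :=
          Finset.card_le_card (hT.spokes_subset_sdiff_comb hw)
      _ ≤ (flipGraph n).dist T (comb w) := card_sdiff_le_dist ⟨p⟩
      _ ≤ eccentricity n T := Finset.le_sup (Finset.mem_univ _)
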